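/- arXiv:0709.2982 — 3 statements merged into one kernel-verified Lean document; each statement's English description precedes it below -/
import Mathlib

section
/- If the P-GARCH(p,q) model possesses a strictly periodically stationary solution, then ρ(∏_{v=1}^S β_v) < 1, where ρ denotes the spectral radius and β_v is the p × p companion matrix whose first row is (β_{v,1}, β_{v,2}, …, β_{v,p}) and whose remaining rows are (I_{(p−1)×(p−1)}, 0_{(p−1)×1}). (Corollary 2.2.) -/
open MeasureTheory ProbabilityTheory Filter
open scoped ENNReal NNReal

noncomputable section

namespace PGARCH

variable {Ω : Type} [MeasurableSpace Ω]

instance matrixMeasurableSpace {r : ℕ} : MeasurableSpace (Matrix (Fin r) (Fin r) ℝ) :=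
  inferInstanceAs (MeasurableSpace ((Fin r) → (Fin r) → ℝ))

/-- Frobenius norm of a real square matrix. -/
def matNorm {r : ℕ} (M : Matrix (Fin r) (Fin r) ℝ) : ℝ :=
  Real.sqrt (∑ i, ∑ j, (M i j) ^ 2)

/-- Ordered product `A_t A_{t-1} ⋯ A_{t-k+1}` of `k` random matrices. -/
def matProd {r : ℕ} (A : ℤ → Ω → Matrix (Fin r) (Fin r) ℝ) (t : ℤ) (k : ℕ) (ω : Ω) :
    Matrix (Fin r) (Fin r) ℝ :=
  ((List.range k).map fun i => A (t - i) ω).prod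

/-- Top Lyapunov exponent `γ^S(A) = inf_{n ≥ 1} (1/n) E log ‖A_{nS} ⋯ A_1‖`. -/
def lyap {r : ℕ} (S : ℕ) (A : ℤ → Ω → Matrix (Fin r) (Fin r) ℝ) (P : Measure Ω) : ℝ :=
  ⨅ n : ℕ+, ((n : ℝ))⁻¹ *
    ∫ ω, Real.log (matNorm (matProd A (((n : ℕ) * S : ℕ) : ℤ) ((n : ℕ) * S) ω)) ∂P

/-- Independent, `S`-periodically distributed random matrices. -/
def IPD {r : ℕ} (S : ℕ) (A : ℤ → Ω → Matrix (Fin r) (Fin r) ℝ) (P : Measure Ω) : Prop :=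
  (∀ t, Measurable (A t)) ∧
    iIndepFun A P ∧
    ∀ t : ℤ, Measure.map (A (t + S)) P = Measure.map (A t) P

/-- Strict periodic stationarity with period `S` of a process. -/
def SPS {E : Type*} [MeasurableSpace E] (S : ℕ) (Y : ℤ → Ω → E) (P : Measure Ω) : Prop :=
  ∀ (n : ℕ) (t : Fin n → ℤ) (k : ℤ),
    Measure.map (fun ω i => Y (t i + S * k) ω) P = Measure.map (fun ω i => Y (t i) ω) P

/-- The σ-algebra generated by `η_s`, `s ≤ t`. -/
def pastFiltration (η : ℤ → Ω → ℝ) (t : ℤ) : MeasurableSpace Ω :=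
  ⨆ s : {s : ℤ // s ≤ t}, MeasurableSpace.comap (η (s : ℤ)) inferInstance

/-- A process is nonanticipative if `Y_t` is measurable w.r.t. `σ(η_s, s ≤ t)`. -/
def Nonanticipative {E : Type*} [MeasurableSpace E] (η : ℤ → Ω → ℝ) (Y : ℤ → Ω → E) : Prop :=
  ∀ t : ℤ, @Measurable Ω E (pastFiltration η t) _ (Y t)

/-- Periodic ergodicity of a process with period `S`. -/
def PeriodicallyErgodic {E : Type*} [MeasurableSpace E] (S : ℕ) (Y : ℤ → Ω → E)
    (P : Measure Ω) : Prop :=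
  ∀ (m : ℕ) (B : Set (Fin (m + 1) → E)), MeasurableSet B →
    ∀ v : ℤ, 1 ≤ v → v ≤ (S : ℤ) →
      ∀ᵐ ω ∂P, Tendsto
        (fun n : ℕ => (n : ℝ)⁻¹ * ∑ t ∈ Finset.range n,
          Set.indicator B (fun _ => (1 : ℝ))
            (fun i : Fin (m + 1) => Y (v + (i : ℕ) + (S : ℤ) * ((t : ℤ) + 1)) ω))
        atTop (nhds (P {ω | (fun i : Fin (m + 1) => Y (v + (i : ℕ)) ω) ∈ B}).toReal)

/-- First row of the random-coefficient matrix: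
`(α_{t,1}, …, α_{t,q}, β_{t,1}, …, β_{t,p})`. -/
def coefRow (q : ℕ) (a b : ℤ → ℕ → ℝ) (t : ℤ) (j : ℕ) : ℝ :=
  if j < q then a t (j + 1) else b t (j - q + 1)

/-- The random matrix `A_t` of the random-coefficient representation of a P-GARCH(p,q). -/
def Amat (p q : ℕ) (a b : ℤ → ℕ → ℝ) (η : ℤ → Ω → ℝ) (t : ℤ) (ω : Ω) :
    Matrix (Fin (q + p)) (Fin (q + p)) ℝ := fun i j =>
  if (i : ℕ) = 0 then coefRow q a b t (j : ℕ) * (η t ω) ^ 2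
  else if (i : ℕ) = q then coefRow q a b t (j : ℕ)
  else if (j : ℕ) = (i : ℕ) - 1 then 1 else 0

/-- The random vector `B_t = (ω_t η_t², 0, …, 0, ω_t, 0, …, 0)′`. -/
def Bvec (p q : ℕ) (w : ℤ → ℝ) (η : ℤ → Ω → ℝ) (t : ℤ) (ω : Ω) : Fin (q + p) → ℝ :=
  fun i =>
    if (i : ℕ) = 0 then w t * (η t ω) ^ 2
    else if (i : ℕ) = q then w t else 0

/-- The state vector `Y_t = (y_t², …, y_{t-q+1}², h_t, …, h_{t-p+1})′`. -/
def stateVec (p q : ℕ) (y h : ℤ → Ω → ℝ) (t : ℤ) (ω : Ω) : Fin (q + p) → ℝ :=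
  fun i =>
    if (i : ℕ) < q then (y (t - (i : ℕ)) ω) ^ 2
    else h (t - ((i : ℕ) - q)) ω

/-- The innovations `(η_t)`: i.i.d., mean zero, unit variance. -/
structure InnovSpec (η : ℤ → Ω → ℝ) (P : Measure Ω) : Prop where
  measη : ∀ t, Measurable (η t)
  indep : iIndepFun η P
  ident : ∀ t, Measure.map (η t) P = Measure.map (η 0) P
  int1 : ∀ t, Integrable (η t) P
  int2 : ∀ t, Integrable (fun ω => (η t ω) ^ 2) P
  mean : ∀ t, ∫ ω, η t ω ∂P = 0
  var : ∀ t, ∫ ω, (η t ω) ^ 2 ∂P = 1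

/-- The P-GARCH(p,q) coefficients: positive intercept, nonnegative, `S`-periodic. -/
structure CoefSpec (p q S : ℕ) (w : ℤ → ℝ) (a b : ℤ → ℕ → ℝ) : Prop where
  posS : 0 < S
  posp : 0 < p
  posq : 0 < q
  wpos : ∀ t, 0 < w t
  anonneg : ∀ t i, 0 ≤ a t i
  bnonneg : ∀ t j, 0 ≤ b t j
  wper : ∀ t, w (t + S) = w t
  aper : ∀ t i, a (t + S) i = a t i
  bper : ∀ t j, b (t + S) j = b t j

/-- A P-GARCH(p,q) process with period `S`: all model assumptions. -/
structure Spec (p q S : ℕ) (w : ℤ → ℝ) (a b : ℤ → ℕ → ℝ)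
    (η y h : ℤ → Ω → ℝ) (P : Measure Ω) : Prop where
  innov : InnovSpec η P
  coefs : CoefSpec p q S w a b
  measy : ∀ t, Measurable (y t)
  meash : ∀ t, Measurable (h t)
  futureIndep : ∀ k t : ℤ, t < k → IndepFun (η k) (y t) P
  hy : ∀ t ω', y t ω' = Real.sqrt (h t ω') * η t ω'
  hrec : ∀ t ω', h t ω' = w t + (∑ i ∈ Finset.Icc 1 q, a t i * (y (t - i) ω') ^ 2)
      + ∑ j ∈ Finset.Icc 1 p, b t j * h (t - j) ω'
  hpos : ∀ t ω', 0 < h t ω'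

/-- Companion matrix with first row `(c 1, …, c p)` and identity block below. -/
def compMat (p : ℕ) (c : ℕ → ℝ) : Matrix (Fin p) (Fin p) ℝ := fun i j =>
  if (i : ℕ) = 0 then c ((j : ℕ) + 1)
  else if (j : ℕ) = (i : ℕ) - 1 then 1 else 0

/-- Spectral radius (maximum modulus of the complex eigenvalues) of a real matrix. -/
def specRad {n : ℕ} (M : Matrix (Fin n) (Fin n) ℝ) : ℝ≥0∞ :=
  spectralRadius ℂ (M.map (fun x => (x : ℂ)))

end PGARCH

open PGARCH Matrix

namespace PGARCHAux

open PGARCH Matrix Filter Finset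

/-- Iterates of the deterministic minorant recursion
`F_{n+1}(t) = w t + ∑_{j=1}^p b t j * F_n(t-j)`, `F_0 = 0`. -/
def Fseq (p : ℕ) (w : ℤ → ℝ) (b : ℤ → ℕ → ℝ) : ℕ → ℤ → ℝ
  | 0, _ => 0
  | (n+1), t => w t + ∑ j ∈ Finset.Icc 1 p, b t j * Fseq p w b n (t - j)

/-- Ordered product of companion matrices `β_t β_{t-1} ⋯ β_{t-k+1}`. -/
def Pmat (p : ℕ) (b : ℤ → ℕ → ℝ) (t : ℤ) (k : ℕ) : Matrix (Fin p) (Fin p) ℝ :=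
  ((List.range k).map fun i : ℕ => compMat p (b (t - (i:ℤ)))).prod

lemma Pmat_zero {p : ℕ} {b : ℤ → ℕ → ℝ} {t : ℤ} : Pmat p b t 0 = 1 := by
  simp [Pmat]

lemma Pmat_succ_right {p : ℕ} {b : ℤ → ℕ → ℝ} {t : ℤ} {k : ℕ} :
    Pmat p b t (k+1) = Pmat p b t k * compMat p (b (t - k)) := by
  simp [Pmat, List.range_succ]

lemma Pmat_succ_left {p : ℕ} {b : ℤ → ℕ → ℝ} {t : ℤ} {k : ℕ} :
    Pmat p b t (k+1) = compMat p (b t) * Pmat p b (t-1) k := by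
  unfold Pmat
  rw [List.range_succ_eq_map, List.map_cons, List.prod_cons, List.map_map]
  have h0 : t - ((0:ℕ) : ℤ) = t := by simp
  rw [h0]
  congr 1
  congr 1
  apply List.map_congr_left
  intro i _
  show compMat p (b (t - ((i+1 : ℕ) : ℤ))) = compMat p (b (t - 1 - (i : ℕ)))
  have : t - ((i+1 : ℕ) : ℤ) = t - 1 - (i : ℕ) := by push_cast; ring
  rw [this]

lemma Pmat_add {p : ℕ} {b : ℤ → ℕ → ℝ} {t : ℤ} {j k : ℕ} :
    Pmat p b t (j + k) = Pmat p b t j * Pmat p b (t - j) k := by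
  unfold Pmat
  rw [List.range_add, List.map_append, List.prod_append, List.map_map]
  congr 1
  congr 1
  apply List.map_congr_left
  intro i _
  show compMat p (b (t - ((j + i : ℕ) : ℤ))) = compMat p (b (t - (j:ℕ) - (i : ℕ)))
  have : t - ((j + i : ℕ) : ℤ) = t - (j:ℕ) - (i : ℕ) := by push_cast; ring
  rw [this]

lemma Pmat_shift {p S : ℕ} {b : ℤ → ℕ → ℝ} (hbp : ∀ t j, b (t + S) j = b t j)
    {t : ℤ} {k : ℕ} : Pmat p b (t - S) k = Pmat p b t k := by
  have hb' : ∀ s : ℤ, b (s - S) = b s := by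
    intro s
    have := hbp (s - S)
    have h2 : s - (S:ℤ) + S = s := by ring
    rw [h2] at this
    funext j; exact (this j).symm ▸ rfl
  unfold Pmat
  congr 1
  congr 1
  funext i
  have h3 : t - (S:ℤ) - (i:ℤ) = (t - (i:ℤ)) - S := by ring
  rw [h3, hb']

lemma Pmat_pow {p S : ℕ} {b : ℤ → ℕ → ℝ} (hbp : ∀ t j, b (t + S) j = b t j) :
    ∀ m : ℕ, Pmat p b S (m * S) = (Pmat p b S S) ^ m := by
  intro m
  induction m with
  | zero => simp [Pmat_zero]
  | succ m ih =>
      have h1 : (m+1) * S = S + m * S := by ring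
      have h2 : Pmat p b ((S:ℤ) - (S:ℕ)) (m * S) = Pmat p b S (m*S) := Pmat_shift hbp
      rw [h1, Pmat_add, h2, ih, pow_succ']

lemma compMat_nonneg {p : ℕ} {c : ℕ → ℝ} (hc : ∀ j, 0 ≤ c j) (i j : Fin p) :
    0 ≤ compMat p c i j := by
  unfold compMat
  split_ifs <;> norm_num [hc]

lemma matmul_nonneg {p : ℕ} {A B : Matrix (Fin p) (Fin p) ℝ}
    (hA : ∀ i j, 0 ≤ A i j) (hB : ∀ i j, 0 ≤ B i j) (i j : Fin p) : 0 ≤ (A * B) i j := by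
  rw [Matrix.mul_apply]
  exact Finset.sum_nonneg fun k _ => mul_nonneg (hA i k) (hB k j)

lemma matpow_nonneg {p : ℕ} {A : Matrix (Fin p) (Fin p) ℝ}
    (hA : ∀ i j, 0 ≤ A i j) : ∀ (k : ℕ) (i j : Fin p), 0 ≤ (A ^ k) i j := by
  intro k
  induction k with
  | zero => intro i j; rw [pow_zero]; by_cases h : i = j <;> simp [Matrix.one_apply, h]
  | succ k ih => intro i j; rw [pow_succ]; exact matmul_nonneg ih hA i j

lemma Pmat_nonneg {p : ℕ} {b : ℤ → ℕ → ℝ} (hb : ∀ t j, 0 ≤ b t j) (t : ℤ) :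
    ∀ (k : ℕ) (i j : Fin p), 0 ≤ Pmat p b t k i j := by
  intro k
  induction k with
  | zero => intro i j; rw [Pmat_zero]; by_cases h : i = j <;> simp [Matrix.one_apply, h]
  | succ k ih =>
      intro i j
      rw [Pmat_succ_right]
      exact matmul_nonneg ih (compMat_nonneg (fun j => hb _ j)) i j

lemma mulVec_mono {p : ℕ} {A : Matrix (Fin p) (Fin p) ℝ} (hA : ∀ i j, 0 ≤ A i j)
    {u v : Fin p → ℝ} (huv : ∀ i, u i ≤ v i) (i : Fin p) : (A *ᵥ u) i ≤ (A *ᵥ v) i := by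
  simp only [Matrix.mulVec, dotProduct]
  exact Finset.sum_le_sum fun j _ => mul_le_mul_of_nonneg_left (huv j) (hA i j)

lemma compMat_mulVec_zero {p : ℕ} (hp : 0 < p) (c : ℕ → ℝ) (u : Fin p → ℝ) :
    (compMat p c *ᵥ u) ⟨0, hp⟩ = ∑ j : Fin p, c ((j:ℕ)+1) * u j := by
  simp [Matrix.mulVec, dotProduct, compMat]

lemma compMat_mulVec_succ {p : ℕ} (c : ℕ → ℝ) (u : Fin p → ℝ) (i : Fin p)
    (hi : (i:ℕ) ≠ 0) :
    (compMat p c *ᵥ u) i = u ⟨(i:ℕ) - 1, by have := i.isLt; omega⟩ := by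
  simp only [Matrix.mulVec, dotProduct, compMat, hi, if_false]
  rw [Finset.sum_eq_single (⟨(i:ℕ) - 1, by have := i.isLt; omega⟩ : Fin p)]
  · simp
  · intro j _ hj
    have hne : ¬ ((j:ℕ) = (i:ℕ) - 1) := by
      intro hc
      exact hj (Fin.ext hc)
    simp [hne]
  · intro hmem; exact absurd (Finset.mem_univ _) hmem

end PGARCHAux

namespace PGARCHAux

open PGARCH Matrix Filter Finset

lemma master {p S : ℕ} (hp : 0 < p) (hS : 0 < S) {w : ℤ → ℝ} {b : ℤ → ℕ → ℝ}
    (hw : ∀ t, 0 < w t) (hb : ∀ t j, 0 ≤ b t j)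
    (hbp : ∀ (t : ℤ) (j : ℕ), b (t + S) j = b t j)
    {L : ℤ → ℝ} (hLpos : ∀ t, 0 < L t)
    (hLrec : ∀ t, L t = w t + ∑ j ∈ Finset.Icc 1 p, b t j * L (t - (j:ℕ)))
    (hLper : ∀ t, L (t + S) = L t) :
    ∃ θ : ℝ, 0 ≤ θ ∧ θ < 1 ∧
      ∀ (k : ℕ) (i j : Fin p),
        (((Pmat p b S S) ^ p) ^ k) i j * L ((S:ℤ) - (j:ℕ)) ≤ θ ^ k * L ((S:ℤ) - (i:ℕ)) := by
  classical
  set X : ℤ → Fin p → ℝ := fun t i => L (t - ((i:ℕ):ℤ)) with hX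
  have st0 : ∀ t : ℤ, (compMat p (b t) *ᵥ X (t-1)) ⟨0, hp⟩ = L t - w t := by
    intro t
    rw [compMat_mulVec_zero hp]
    have h1 : ∑ j : Fin p, b t ((j:ℕ)+1) * X (t-1) j
        = ∑ i ∈ Finset.range p, b t (i+1) * L (t - 1 - (i:ℕ)) :=
      Fin.sum_univ_eq_sum_range (fun i => b t (i+1) * L (t - 1 - (i:ℕ))) p
    have h2 : ∑ j ∈ Finset.Icc 1 p, b t j * L (t - (j:ℕ))
        = ∑ i ∈ Finset.range p, b t (1+i) * L (t - ((1+i : ℕ) : ℤ)) := by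
      rw [← Finset.Ico_add_one_right_eq_Icc, Finset.sum_Ico_eq_sum_range]
      simp
    have h3 : ∀ i ∈ Finset.range p,
        b t (i+1) * L (t - 1 - (i:ℕ)) = b t (1+i) * L (t - ((1+i:ℕ):ℤ)) := by
      intro i _
      have e1 : i + 1 = 1 + i := by ring
      have e2 : t - 1 - ((i:ℕ):ℤ) = t - ((1+i:ℕ):ℤ) := by push_cast; ring
      rw [e1, e2]
    rw [h1, Finset.sum_congr rfl h3, ← h2, hLrec t]
    ring
  have sti : ∀ (t : ℤ) (u : Fin p → ℝ) (i : Fin p) (hi : (i:ℕ) ≠ 0),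
      (compMat p (b t) *ᵥ u) i = u ⟨(i:ℕ)-1, by have := i.isLt; omega⟩ :=
    fun t u i hi => compMat_mulVec_succ _ u i hi
  have hstep : ∀ (t : ℤ) (i : Fin p), (compMat p (b t) *ᵥ X (t-1)) i ≤ X t i := by
    intro t i
    by_cases hi : (i:ℕ) = 0
    · have hieq : i = ⟨0, hp⟩ := Fin.ext hi
      rw [hieq, st0 t]
      have hXt : X t (⟨0, hp⟩ : Fin p) = L t := by simp [hX]
      rw [hXt]
      linarith [hw t]
    · rw [sti t _ i hi]
      show L (t - 1 - (((i:ℕ)-1 : ℕ):ℤ)) ≤ L (t - ((i:ℕ):ℤ))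
      have hi1 : 1 ≤ (i:ℕ) := Nat.one_le_iff_ne_zero.mpr hi
      have e : t - 1 - (((i:ℕ)-1 : ℕ):ℤ) = t - ((i:ℕ):ℤ) := by omega
      rw [e]
  have hPnn : ∀ (t : ℤ) (k : ℕ) (i j : Fin p), 0 ≤ Pmat p b t k i j :=
    fun t => Pmat_nonneg hb t
  have hchain : ∀ (k : ℕ) (t : ℤ) (i : Fin p),
      (Pmat p b t k *ᵥ X (t - (k:ℕ))) i ≤ X t i := by
    intro k
    induction k with
    | zero =>
        intro t i
        rw [Pmat_zero, Matrix.one_mulVec]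
        have e : t - ((0:ℕ):ℤ) = t := by norm_num
        rw [e]
    | succ k ih =>
        intro t i
        rw [Pmat_succ_right, ← Matrix.mulVec_mulVec]
        have harg : t - ((k+1:ℕ):ℤ) = (t - (k:ℕ)) - 1 := by push_cast; ring
        rw [harg]
        calc (Pmat p b t k *ᵥ (compMat p (b (t - (k:ℕ))) *ᵥ X ((t - (k:ℕ)) - 1))) i
            ≤ (Pmat p b t k *ᵥ X (t - (k:ℕ))) i :=
              mulVec_mono (hPnn t k) (fun j => hstep (t - (k:ℕ)) j) i
          _ ≤ X t i := ih t i
  have hshift : ∀ (i : ℕ) (hip : i < p) (t : ℤ) (u : Fin p → ℝ),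
      (Pmat p b t (i+1) *ᵥ u) ⟨i, hip⟩ = (compMat p (b (t - (i:ℕ))) *ᵥ u) ⟨0, hp⟩ := by
    intro i
    induction i with
    | zero =>
        intro hip t u
        have h1 : Pmat p b t 1 = compMat p (b t) := by
          rw [Pmat_succ_left, Pmat_zero, mul_one]
        rw [h1]
        norm_num
    | succ i ih =>
        intro hip t u
        rw [Pmat_succ_left, ← Matrix.mulVec_mulVec]
        have h2 : ((compMat p (b t)) *ᵥ (Pmat p b (t-1) (i+1) *ᵥ u)) ⟨i+1, hip⟩
            = (Pmat p b (t-1) (i+1) *ᵥ u) ⟨i, by omega⟩ :=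
          compMat_mulVec_succ _ _ ⟨i+1, hip⟩ (by simp)
        rw [h2, ih (by omega) (t-1) u]
        have h3 : t - 1 - ((i:ℕ):ℤ) = t - ((i+1:ℕ):ℤ) := by push_cast; ring
        rw [h3]
  have hslack : ∀ (i : Fin p) (k : ℕ), (i:ℕ)+1 ≤ k →
      (Pmat p b S k *ᵥ X ((S:ℤ) - (k:ℕ))) i ≤ X S i - w ((S:ℤ) - ((i:ℕ):ℤ)) := by
    intro i k hk
    induction k, hk using Nat.le_induction with
    | base =>
        have harg : (S:ℤ) - (((i:ℕ)+1:ℕ):ℤ) = ((S:ℤ) - ((i:ℕ):ℤ)) - 1 := by push_cast; ring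
        have hXS : X S i = L ((S:ℤ) - ((i:ℕ):ℤ)) := rfl
        calc (Pmat p b S ((i:ℕ)+1) *ᵥ X ((S:ℤ) - (((i:ℕ)+1:ℕ):ℤ))) i
            = (compMat p (b ((S:ℤ) - ((i:ℕ):ℤ))) *ᵥ X (((S:ℤ) - ((i:ℕ):ℤ)) - 1)) ⟨0, hp⟩ := by
              rw [harg]; exact hshift (i:ℕ) i.isLt S _
          _ = L ((S:ℤ) - ((i:ℕ):ℤ)) - w ((S:ℤ) - ((i:ℕ):ℤ)) := st0 _
          _ = X S i - w ((S:ℤ) - ((i:ℕ):ℤ)) := by rw [hXS]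
          _ ≤ X S i - w ((S:ℤ) - ((i:ℕ):ℤ)) := le_rfl
    | succ k hk ih =>
        rw [Pmat_succ_right, ← Matrix.mulVec_mulVec]
        have harg : (S:ℤ) - ((k+1:ℕ):ℤ) = ((S:ℤ) - (k:ℕ)) - 1 := by push_cast; ring
        rw [harg]
        calc (Pmat p b S k *ᵥ (compMat p (b ((S:ℤ) - (k:ℕ))) *ᵥ X (((S:ℤ)-(k:ℕ))-1))) i
            ≤ (Pmat p b S k *ᵥ X ((S:ℤ) - (k:ℕ))) i :=
              mulVec_mono (hPnn _ k) (fun j => hstep _ j) i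
          _ ≤ X S i - w ((S:ℤ) - ((i:ℕ):ℤ)) := ih
  set N : Matrix (Fin p) (Fin p) ℝ := Pmat p b S (p * S) with hN
  have hNpow : N = (Pmat p b S S) ^ p := Pmat_pow hbp p
  have hLperk : ∀ (k : ℕ) (t : ℤ), L (t - (k:ℕ) * (S:ℤ)) = L t := by
    intro k
    induction k with
    | zero => intro t; norm_num
    | succ k ih =>
        intro t
        have h1 : t - ((k+1:ℕ):ℤ) * S = (t - S) - (k:ℕ) * S := by push_cast; ring
        rw [h1, ih (t - S)]
        have h2 := hLper (t - S)
        have h3 : t - (S:ℤ) + S = t := by ring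
        rw [h3] at h2
        exact h2.symm
  have hXper : X ((S:ℤ) - ((p*S:ℕ):ℤ)) = X S := by
    funext j
    show L ((S:ℤ) - ((p*S:ℕ):ℤ) - ((j:ℕ):ℤ)) = L ((S:ℤ) - ((j:ℕ):ℤ))
    have h1 : (S:ℤ) - ((p*S:ℕ):ℤ) - ((j:ℕ):ℤ) = ((S:ℤ) - ((j:ℕ):ℤ)) - (p:ℕ) * (S:ℤ) := by
      push_cast; ring
    rw [h1, hLperk p]
  have hNs : ∀ i : Fin p, (N *ᵥ X S) i ≤ X S i - w ((S:ℤ) - ((i:ℕ):ℤ)) := by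
    intro i
    have hk : (i:ℕ) + 1 ≤ p * S := by
      have h1 : (i:ℕ) < p := i.isLt
      have h2 := Nat.le_mul_of_pos_right p hS
      omega
    have h4 := hslack i (p*S) hk
    rw [hXper] at h4
    exact h4
  have hxpos : ∀ i : Fin p, 0 < X S i := fun i => hLpos _
  have hnem : Nonempty (Fin p) := Fin.pos_iff_nonempty.mp hp
  have hne : (Finset.univ : Finset (Fin p)).Nonempty := Finset.univ_nonempty
  set θ : ℝ :=
    (Finset.univ.sup' hne fun i : Fin p => (X S i - w ((S:ℤ) - ((i:ℕ):ℤ))) / X S i) ⊔ 0 with hθ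
  have hθ0 : 0 ≤ θ := le_sup_right
  have hθ1 : θ < 1 := by
    apply sup_lt_iff.mpr
    constructor
    · rw [Finset.sup'_lt_iff]
      intro i _
      rw [div_lt_one (hxpos i)]
      linarith [hw ((S:ℤ) - ((i:ℕ):ℤ))]
    · norm_num
  have hNθ : ∀ i, (N *ᵥ X S) i ≤ θ * X S i := by
    intro i
    calc (N *ᵥ X S) i ≤ X S i - w ((S:ℤ) - ((i:ℕ):ℤ)) := hNs i
      _ = ((X S i - w ((S:ℤ) - ((i:ℕ):ℤ))) / X S i) * X S i :=
          (div_mul_cancel₀ _ (hxpos i).ne').symm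
      _ ≤ θ * X S i := by
          have hle : (X (S:ℤ) i - w ((S:ℤ) - ((i:ℕ):ℤ))) / X (S:ℤ) i ≤ θ := by
            refine le_trans ?_ le_sup_left
            exact Finset.le_sup'
              (fun i : Fin p => (X (S:ℤ) i - w ((S:ℤ) - ((i:ℕ):ℤ))) / X (S:ℤ) i)
              (Finset.mem_univ i)
          exact mul_le_mul_of_nonneg_right hle (hxpos i).le
  have hNnn : ∀ i j, 0 ≤ N i j := hPnn S (p * S)
  have hNk : ∀ (k : ℕ) (i : Fin p), ((N^k) *ᵥ X S) i ≤ θ^k * X S i := by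
    intro k
    induction k with
    | zero => intro i; rw [pow_zero, Matrix.one_mulVec, pow_zero, one_mul]
    | succ k ih =>
        intro i
        rw [pow_succ', ← Matrix.mulVec_mulVec]
        calc (N *ᵥ ((N^k) *ᵥ X (S:ℤ))) i
            ≤ (N *ᵥ (θ^k • X (S:ℤ))) i := mulVec_mono hNnn (fun j => by simpa using ih j) i
          _ = θ^k * (N *ᵥ X (S:ℤ)) i := by rw [Matrix.mulVec_smul]; simp
          _ ≤ θ^k * (θ * X (S:ℤ) i) := mul_le_mul_of_nonneg_left (hNθ i) (pow_nonneg hθ0 k)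
          _ = θ^(k+1) * X (S:ℤ) i := by ring
  refine ⟨θ, hθ0, hθ1, ?_⟩
  intro k i j
  rw [← hNpow]
  have h1 : (N^k) i j * X (S:ℤ) j ≤ ((N^k) *ᵥ X (S:ℤ)) i := by
    have h2 : ((N^k) *ᵥ X (S:ℤ)) i = ∑ j', (N^k) i j' * X (S:ℤ) j' := by
      simp [Matrix.mulVec, dotProduct]
    rw [h2]
    exact Finset.single_le_sum (f := fun j' => (N^k) i j' * X (S:ℤ) j')
      (fun j' _ => mul_nonneg (matpow_nonneg hNnn k i j') (hxpos j').le) (Finset.mem_univ j)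
  exact le_trans h1 (hNk k i)

lemma specRad_lt_one_of_bound {n : ℕ} (hn : 0 < n) (M : Matrix (Fin n) (Fin n) ℝ)
    (hM : ∀ i j, 0 ≤ M i j) (m : ℕ) (hm : 0 < m)
    (x : Fin n → ℝ) (hx : ∀ i, 0 < x i) (θ : ℝ) (hθ0 : 0 ≤ θ) (hθ1 : θ < 1)
    (hbd : ∀ (k : ℕ) (i j : Fin n), ((M ^ m) ^ k) i j * x j ≤ θ ^ k * x i) :
    specRad M < 1 := by
  classical
  have hnem : Nonempty (Fin n) := Fin.pos_iff_nonempty.mp hn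
  have huniv : (Finset.univ : Finset (Fin n)).Nonempty := Finset.univ_nonempty
  set xmax : ℝ := Finset.univ.sup' huniv x with hxmax
  have hxmax_le : ∀ i, x i ≤ xmax := fun i => Finset.le_sup' x (Finset.mem_univ i)
  set K : ℝ := ∑ j : Fin n, xmax / x j with hK
  have hKpos : 0 < K :=
    Finset.sum_pos (fun j _ => div_pos (lt_of_lt_of_le (hx j) (hxmax_le j)) (hx j)) huniv
  obtain ⟨k₀, hk₀⟩ := exists_pow_lt_of_lt_one (show (0:ℝ) < 1/K by positivity) hθ1
  have hθk1 : θ ^ (k₀+1) * K < 1 := by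
    have h1 : θ ^ (k₀+1) ≤ θ ^ k₀ := pow_le_pow_of_le_one hθ0 hθ1.le (Nat.le_succ k₀)
    calc θ^(k₀+1) * K ≤ θ^k₀ * K := mul_le_mul_of_nonneg_right h1 hKpos.le
      _ < (1/K) * K := mul_lt_mul_of_pos_right hk₀ hKpos
      _ = 1 := by field_simp
  set k₁ : ℕ := k₀ + 1 with hk₁
  set n₁ : ℕ := m * k₁ with hn₁
  have hn₁pos : 0 < n₁ := Nat.mul_pos hm (Nat.succ_pos k₀)
  set ε : ℝ := θ^k₁ * K with hε
  have hε0 : 0 ≤ ε := mul_nonneg (pow_nonneg hθ0 _) hKpos.le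
  have hε1 : ε < 1 := hθk1
  have hpow_nn : ∀ (k:ℕ) (i j : Fin n), 0 ≤ (M^k) i j := matpow_nonneg hM
  have hrow : ∀ i : Fin n, ∑ j, (M ^ n₁) i j ≤ ε := by
    intro i
    have h1 : ∀ j, (M ^ n₁) i j ≤ θ^k₁ * (xmax / x j) := by
      intro j
      have h2 := hbd k₁ i j
      rw [← pow_mul] at h2
      have h3 : (M ^ n₁) i j * x j ≤ θ^k₁ * xmax :=
        le_trans h2 (mul_le_mul_of_nonneg_left (hxmax_le i) (pow_nonneg hθ0 _))
      have h4 := (le_div_iff₀ (hx j)).mpr h3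
      calc (M^n₁) i j ≤ θ^k₁*xmax / x j := h4
        _ = θ^k₁ * (xmax / x j) := by ring
    calc ∑ j, (M ^ n₁) i j ≤ ∑ j, θ^k₁ * (xmax / x j) := Finset.sum_le_sum (fun j _ => h1 j)
      _ = θ^k₁ * K := by rw [hK, Finset.mul_sum]
      _ = ε := rfl
  have hzbound : ∀ z ∈ spectrum ℂ (M.map (fun x : ℝ => (x:ℂ))), ‖z‖ ^ n₁ ≤ ε := by
    intro z hz
    rw [spectrum.mem_iff] at hz
    set Mc := M.map (fun x : ℝ => (x:ℂ)) with hMc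
    have hdet : ((algebraMap ℂ (Matrix (Fin n) (Fin n) ℂ)) z - Mc).det = 0 := by
      by_contra hd
      exact hz ((Matrix.isUnit_iff_isUnit_det _).mpr (isUnit_iff_ne_zero.mpr hd))
    obtain ⟨v, hv0, hv⟩ := Matrix.exists_mulVec_eq_zero_iff.mpr hdet
    have heig : Mc *ᵥ v = z • v := by
      have h1 : ((algebraMap ℂ (Matrix (Fin n) (Fin n) ℂ)) z - Mc) *ᵥ v = z • v - Mc *ᵥ v := by
        rw [Matrix.sub_mulVec, Algebra.algebraMap_eq_smul_one, Matrix.smul_mulVec,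
          Matrix.one_mulVec]
      rw [h1] at hv
      exact (sub_eq_zero.mp hv).symm
    have heign : ∀ k : ℕ, (Mc ^ k) *ᵥ v = z ^ k • v := by
      intro k
      induction k with
      | zero => simp [Matrix.one_mulVec]
      | succ k ih =>
          rw [pow_succ', ← Matrix.mulVec_mulVec, ih, Matrix.mulVec_smul, heig, smul_smul,
            ← pow_succ]
    have hmap : ∀ k : ℕ, Mc ^ k = (M ^ k).map (fun x : ℝ => (x:ℂ)) := by
      intro k
      induction k with
      | zero =>
          rw [pow_zero, pow_zero]
          exact (Matrix.map_one _ (by norm_num) (by norm_num)).symm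
      | succ k ih =>
          rw [pow_succ, pow_succ, ih, hMc]
          exact (Matrix.map_mul (f := Complex.ofRealHom)).symm
    obtain ⟨i₀, _, hi₀⟩ := Finset.exists_max_image Finset.univ (fun i => ‖v i‖) huniv
    have hvi₀ : 0 < ‖v i₀‖ := by
      obtain ⟨i, hi⟩ := Function.ne_iff.mp hv0
      exact lt_of_lt_of_le (norm_pos_iff.mpr hi) (hi₀ i (Finset.mem_univ i))
    have hkey : ‖z‖ ^ n₁ * ‖v i₀‖ ≤ ε * ‖v i₀‖ := by
      have h1 : ((Mc ^ n₁) *ᵥ v) i₀ = z ^ n₁ * v i₀ := by rw [heign]; simp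
      have h2 : ‖z ^ n₁ * v i₀‖ = ‖z‖^n₁ * ‖v i₀‖ := by rw [norm_mul, norm_pow]
      rw [← h2, ← h1]
      have h3 : ((Mc ^ n₁) *ᵥ v) i₀ = ∑ j, (((M ^ n₁) i₀ j : ℝ) : ℂ) * v j := by
        rw [hmap]; simp [Matrix.mulVec, dotProduct, Matrix.map_apply]
      rw [h3]
      calc ‖∑ j, (((M ^ n₁) i₀ j : ℝ) : ℂ) * v j‖
          ≤ ∑ j, ‖(((M ^ n₁) i₀ j : ℝ) : ℂ) * v j‖ := norm_sum_le _ _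
        _ = ∑ j, (M ^ n₁) i₀ j * ‖v j‖ := by
            apply Finset.sum_congr rfl
            intro j _
            rw [norm_mul]
            congr 1
            rw [Complex.norm_real, Real.norm_eq_abs]
            exact abs_of_nonneg (hpow_nn n₁ i₀ j)
        _ ≤ ∑ j, (M ^ n₁) i₀ j * ‖v i₀‖ :=
            Finset.sum_le_sum fun j _ =>
              mul_le_mul_of_nonneg_left (hi₀ j (Finset.mem_univ j)) (hpow_nn n₁ i₀ j)
        _ = (∑ j, (M ^ n₁) i₀ j) * ‖v i₀‖ := by rw [← Finset.sum_mul]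
        _ ≤ ε * ‖v i₀‖ := mul_le_mul_of_nonneg_right (hrow i₀) (norm_nonneg _)
    exact le_of_mul_le_mul_right hkey hvi₀
  have hn₁ne : ((n₁:ℝ)) ≠ 0 := Nat.cast_ne_zero.mpr hn₁pos.ne'
  have hn₁inv : 0 < 1 / (n₁:ℝ) := by positivity
  set r : ℝ := ε ^ (1 / (n₁:ℝ)) with hr
  have hr1 : r < 1 := Real.rpow_lt_one hε0 hε1 hn₁inv
  have hrz : ∀ z ∈ spectrum ℂ (M.map (fun x : ℝ => (x:ℂ))), ‖z‖ ≤ r := by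
    intro z hz
    have h1 := hzbound z hz
    have h2 : ‖z‖ = ((‖z‖ ^ n₁ : ℝ)) ^ (1/(n₁:ℝ)) := by
      rw [← Real.rpow_natCast ‖z‖ n₁, ← Real.rpow_mul (norm_nonneg z), mul_one_div,
        div_self hn₁ne, Real.rpow_one]
    rw [h2, hr]
    exact Real.rpow_le_rpow (by positivity) h1 hn₁inv.le
  have hfin : specRad M ≤ ENNReal.ofReal r := by
    unfold PGARCH.specRad spectralRadius
    apply iSup₂_le
    intro z hz
    rw [← enorm_eq_nnnorm, ← ofReal_norm]
    exact ENNReal.ofReal_le_ofReal (hrz z hz)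
  exact lt_of_le_of_lt hfin (ENNReal.ofReal_lt_one.mpr hr1)

end PGARCHAux


/-- **Corollary 2.2.** If the P-GARCH(p,q) model possesses a strictly periodically
stationary solution, then `ρ(∏_{v=1}^S β_v) < 1`, where `β_v` is the `p × p` companion
matrix with first row `(β_{v,1}, …, β_{v,p})`. -/
theorem pgarch_spectral_radius_lt_one_of_sps
    {Ω : Type} [MeasurableSpace Ω] {P : Measure Ω} [IsProbabilityMeasure P]
    {p q S : ℕ} {w : ℤ → ℝ} {a b : ℤ → ℕ → ℝ} {η y h : ℤ → Ω → ℝ}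
    (hspec : Spec p q S w a b η y h P)
    (hsps : SPS S (fun t ω => (y t ω, h t ω)) P) :
    specRad (((List.range S).map fun i => compMat p (b ((S : ℤ) - i))).prod) < 1 := by
  classical
  obtain ⟨ω₀⟩ : Nonempty Ω := by
    by_contra hc
    rw [not_nonempty_iff] at hc
    have h1 : P Set.univ = 1 := measure_univ
    rw [Set.univ_eq_empty_iff.mpr hc, measure_empty] at h1
    exact zero_ne_one h1
  have hw := hspec.coefs.wpos
  have hb := hspec.coefs.bnonneg
  have hp := hspec.coefs.posp
  have hS := hspec.coefs.posS
  have hbp := hspec.coefs.bper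
  have hwp := hspec.coefs.wper
  have ha := hspec.coefs.anonneg
  have hFmono : ∀ (n : ℕ) (t : ℤ),
      PGARCHAux.Fseq p w b n t ≤ PGARCHAux.Fseq p w b (n+1) t := by
    intro n
    induction n with
    | zero =>
        intro t
        simp only [PGARCHAux.Fseq, mul_zero, Finset.sum_const_zero, add_zero]
        exact (hw t).le
    | succ n ih =>
        intro t
        simp only [PGARCHAux.Fseq]
        apply add_le_add_right
        apply Finset.sum_le_sum
        intro j _
        exact mul_le_mul_of_nonneg_left (ih (t - j)) (hb t j)
  have hFle : ∀ (n : ℕ) (t : ℤ), PGARCHAux.Fseq p w b n t ≤ h t ω₀ := by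
    intro n
    induction n with
    | zero =>
        intro t
        simp only [PGARCHAux.Fseq]
        exact (hspec.hpos t ω₀).le
    | succ n ih =>
        intro t
        simp only [PGARCHAux.Fseq]
        rw [hspec.hrec t ω₀]
        have h1 : ∑ j ∈ Finset.Icc 1 p, b t j * PGARCHAux.Fseq p w b n (t - j)
            ≤ ∑ j ∈ Finset.Icc 1 p, b t j * h (t - j) ω₀ :=
          Finset.sum_le_sum fun j _ => mul_le_mul_of_nonneg_left (ih (t-j)) (hb t j)
        have h2 : 0 ≤ ∑ i ∈ Finset.Icc 1 q, a t i * (y (t - i) ω₀)^2 :=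
          Finset.sum_nonneg fun i _ => mul_nonneg (ha t i) (sq_nonneg _)
        linarith
  have hFper : ∀ (n : ℕ) (t : ℤ),
      PGARCHAux.Fseq p w b n (t + S) = PGARCHAux.Fseq p w b n t := by
    intro n
    induction n with
    | zero => intro t; simp [PGARCHAux.Fseq]
    | succ n ih =>
        intro t
        simp only [PGARCHAux.Fseq]
        rw [hwp t]
        congr 1
        apply Finset.sum_congr rfl
        intro j _
        rw [hbp t j]
        have h1 : t + (S:ℤ) - j = (t - j) + S := by ring
        rw [h1, ih (t - j)]
  have hmonot : ∀ t, Monotone fun n => PGARCHAux.Fseq p w b n t :=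
    fun t => monotone_nat_of_le_succ (fun n => hFmono n t)
  have hbdd : ∀ t, BddAbove (Set.range fun n => PGARCHAux.Fseq p w b n t) := by
    intro t
    refine ⟨h t ω₀, ?_⟩
    rintro z ⟨n, rfl⟩
    exact hFle n t
  set L : ℤ → ℝ := fun t => ⨆ n, PGARCHAux.Fseq p w b n t with hLdef
  have htend : ∀ t, Filter.Tendsto (fun n => PGARCHAux.Fseq p w b n t)
      Filter.atTop (nhds (L t)) := fun t => tendsto_atTop_ciSup (hmonot t) (hbdd t)
  have hLrec : ∀ t, L t = w t + ∑ j ∈ Finset.Icc 1 p, b t j * L (t - (j:ℕ)) := by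
    intro t
    have h1 : Filter.Tendsto (fun n => PGARCHAux.Fseq p w b (n+1) t)
        Filter.atTop (nhds (L t)) :=
      (htend t).comp (Filter.tendsto_add_atTop_nat 1)
    have h2 : Filter.Tendsto
        (fun n => w t + ∑ j ∈ Finset.Icc 1 p, b t j * PGARCHAux.Fseq p w b n (t - (j:ℕ)))
        Filter.atTop
        (nhds (w t + ∑ j ∈ Finset.Icc 1 p, b t j * L (t - (j:ℕ)))) :=
      tendsto_const_nhds.add
        (tendsto_finset_sum _ fun j _ => tendsto_const_nhds.mul (htend (t - (j:ℕ))))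
    have h3 : (fun n => PGARCHAux.Fseq p w b (n+1) t)
        = fun n => w t + ∑ j ∈ Finset.Icc 1 p, b t j * PGARCHAux.Fseq p w b n (t - (j:ℕ)) := by
      funext n
      simp [PGARCHAux.Fseq]
    rw [h3] at h1
    exact tendsto_nhds_unique h1 h2
  have hLw : ∀ t, w t ≤ L t := by
    intro t
    have h1 : PGARCHAux.Fseq p w b 1 t ≤ L t := le_ciSup (hbdd t) 1
    simpa [PGARCHAux.Fseq] using h1
  have hLpos : ∀ t, 0 < L t := fun t => lt_of_lt_of_le (hw t) (hLw t)
  have hLper : ∀ t, L (t + S) = L t := by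
    intro t
    exact iSup_congr (fun n => hFper n t)
  obtain ⟨θ, hθ0, hθ1, hbd⟩ := PGARCHAux.master hp hS hw hb hbp hLpos hLrec hLper
  have hgoal : (((List.range S).map fun i => compMat p (b ((S : ℤ) - i))).prod)
      = PGARCHAux.Pmat p b S S := by
    unfold PGARCHAux.Pmat
    simp only [bind_pure_comp, List.map_eq_map, List.map_map]
    rfl
  rw [hgoal]
  exact PGARCHAux.specRad_lt_one_of_bound hp (PGARCHAux.Pmat p b S S)
    (PGARCHAux.Pmat_nonneg hb S S) p hp (fun i => L ((S:ℤ) - ((i:ℕ):ℤ)))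
    (fun i => hLpos _) θ hθ0 hθ1 hbd
end
end

section
/- If γ^S(A) < 0 for the i.p.d. sequence of random matrices (A_t) associated with a P-GARCH(p,q) process, then there exist δ with 0 < δ < 1 and a positive integer n₀ such that E(‖A_{n₀S} A_{n₀S−1} ⋯ A_1‖^δ) < 1. (Key claim (A.6) in the proof of Theorem 2.3.) -/
open MeasureTheory ProbabilityTheory Filter
open scoped ENNReal NNReal

noncomputable section

open PGARCH Matrix

section AuxLemmas

variable {Ω : Type} [MeasurableSpace Ω]

lemma matNorm_nonneg {r : ℕ} (M : Matrix (Fin r) (Fin r) ℝ) : 0 ≤ matNorm M :=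
  Real.sqrt_nonneg _

lemma matNorm_mul_le {r : ℕ} (M N : Matrix (Fin r) (Fin r) ℝ) :
    matNorm (M * N) ≤ matNorm M * matNorm N := by
  letI := Matrix.frobeniusSeminormedAddCommGroup (m := Fin r) (n := Fin r) (α := ℝ)
  have key : ∀ K : Matrix (Fin r) (Fin r) ℝ, matNorm K = ‖K‖ := fun K => by
    rw [Matrix.frobenius_norm_def, matNorm, Real.sqrt_eq_rpow]
    congr 1
    refine Finset.sum_congr rfl fun i _ => Finset.sum_congr rfl fun j _ => ?_
    rw [Real.norm_eq_abs, show (2:ℝ) = ((2:ℕ):ℝ) by norm_num, Real.rpow_natCast, sq_abs]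
  rw [key, key, key]
  exact Matrix.frobenius_norm_mul M N

lemma matNorm_le_sum {r : ℕ} (M : Matrix (Fin r) (Fin r) ℝ) :
    matNorm M ≤ ∑ i, ∑ j, |M i j| := by
  rw [matNorm]
  have h1 : (∑ i, ∑ j, (M i j) ^ 2) ≤ (∑ i, ∑ j, |M i j|) ^ 2 := by
    calc ∑ i, ∑ j, (M i j) ^ 2 = ∑ i, ∑ j, |M i j| ^ 2 := by simp [sq_abs]
      _ ≤ ∑ i, (∑ j, |M i j|) ^ 2 :=
          Finset.sum_le_sum fun i _ =>
            Finset.sum_sq_le_sq_sum_of_nonneg fun j _ => abs_nonneg _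
      _ ≤ (∑ i, ∑ j, |M i j|) ^ 2 :=
          Finset.sum_sq_le_sq_sum_of_nonneg fun i _ =>
            Finset.sum_nonneg fun j _ => abs_nonneg _
  calc Real.sqrt (∑ i, ∑ j, (M i j) ^ 2) ≤ Real.sqrt ((∑ i, ∑ j, |M i j|) ^ 2) :=
        Real.sqrt_le_sqrt h1
    _ = ∑ i, ∑ j, |M i j| := Real.sqrt_sq (by positivity)

lemma matProd_succ {r : ℕ} (A : ℤ → Ω → Matrix (Fin r) (Fin r) ℝ) (t : ℤ) (k : ℕ) (ω : Ω) :
    matProd A t (k + 1) ω = matProd A t k ω * A (t - k) ω := by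
  simp [matProd, List.range_succ]

lemma measurable_matrix_mul {r : ℕ} {f g : Ω → Matrix (Fin r) (Fin r) ℝ}
    (hf : Measurable f) (hg : Measurable g) : Measurable fun ω => f ω * g ω := by
  apply measurable_pi_lambda; intro i; apply measurable_pi_lambda; intro j
  simp only [Matrix.mul_apply]
  refine Finset.measurable_sum _ fun k _ => Measurable.mul ?_ ?_
  · exact (measurable_pi_apply k).comp ((measurable_pi_apply i).comp hf)
  · exact (measurable_pi_apply j).comp ((measurable_pi_apply k).comp hg)

lemma measurable_matNorm {r : ℕ} {f : Ω → Matrix (Fin r) (Fin r) ℝ} (hf : Measurable f) :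
    Measurable fun ω => matNorm (f ω) := by
  unfold matNorm
  apply Real.continuous_sqrt.measurable.comp
  refine Finset.measurable_sum _ fun i _ => Finset.measurable_sum _ fun j _ => ?_
  exact ((measurable_pi_apply j).comp ((measurable_pi_apply i).comp hf)).pow_const 2

lemma measurable_matProd {r : ℕ} {A : ℤ → Ω → Matrix (Fin r) (Fin r) ℝ}
    (hA : ∀ t, Measurable (A t)) (t : ℤ) (k : ℕ) : Measurable (matProd A t k) := by
  induction k with
  | zero =>
    have h0 : matProd A t 0 = fun _ => (1 : Matrix (Fin r) (Fin r) ℝ) := by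
      funext ω; simp [matProd]
    rw [h0]; exact measurable_const
  | succ k ih =>
    have : matProd A t (k + 1) = fun ω => matProd A t k ω * A (t - k) ω :=
      funext fun ω => matProd_succ A t k ω
    rw [this]
    exact measurable_matrix_mul ih (hA _)

lemma matNorm_matProd_le {r : ℕ} (A : ℤ → Ω → Matrix (Fin r) (Fin r) ℝ) (t : ℤ) (k : ℕ)
    (ω : Ω) :
    matNorm (matProd A t (k + 1) ω) ≤ ∏ i ∈ Finset.range (k + 1), matNorm (A (t - i) ω) := by
  induction k with
  | zero => simp [matProd, List.range_succ]
  | succ k ih =>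
    rw [matProd_succ, Finset.prod_range_succ]
    calc matNorm (matProd A t (k + 1) ω * A (t - (k + 1 : ℕ)) ω)
        ≤ matNorm (matProd A t (k + 1) ω) * matNorm (A (t - (k + 1 : ℕ)) ω) :=
          matNorm_mul_le _ _
      _ ≤ _ := mul_le_mul_of_nonneg_right ih (matNorm_nonneg _)

lemma measurable_Amat {p q : ℕ} {a b : ℤ → ℕ → ℝ} {η : ℤ → Ω → ℝ}
    (hη : ∀ t, Measurable (η t)) (t : ℤ) : Measurable (Amat p q a b η t) := by
  apply measurable_pi_lambda; intro i; apply measurable_pi_lambda; intro j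
  unfold Amat
  exact Measurable.ite (MeasurableSet.const _)
    (measurable_const.mul ((hη t).pow_const 2)) measurable_const

lemma Amat_entry_le {p q : ℕ} (a b : ℤ → ℕ → ℝ) (η : ℤ → Ω → ℝ) (t : ℤ) (ω : Ω)
    (i j : Fin (q + p)) :
    |Amat p q a b η t ω i j| ≤ (|coefRow q a b t (j : ℕ)| + 1) * (1 + (η t ω) ^ 2) := by
  have h2 : (0 : ℝ) ≤ (η t ω) ^ 2 := sq_nonneg _
  have hc : (0 : ℝ) ≤ |coefRow q a b t (j : ℕ)| := abs_nonneg _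
  unfold Amat
  split_ifs with ha hb hd
  · rw [abs_mul, abs_pow, sq_abs]
    nlinarith
  · nlinarith
  · rw [abs_one]; nlinarith
  · rw [abs_zero]; positivity

lemma Amat_norm_le {p q : ℕ} (a b : ℤ → ℕ → ℝ) (η : ℤ → Ω → ℝ) (t : ℤ) (ω : Ω) :
    matNorm (Amat p q a b η t ω) ≤
      (∑ i : Fin (q + p), ∑ j : Fin (q + p), (|coefRow q a b t (j : ℕ)| + 1)) *
        (1 + (η t ω) ^ 2) := by
  refine (matNorm_le_sum _).trans ?_
  rw [Finset.sum_mul]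
  refine Finset.sum_le_sum fun i _ => ?_
  rw [Finset.sum_mul]
  exact Finset.sum_le_sum fun j _ => Amat_entry_le a b η t ω i j

end AuxLemmas

/-- **Claim (A.6) in the proof of Theorem 2.3.** If `γ^S(A) < 0` for the i.p.d. sequence
of random matrices `(A_t)` associated with a P-GARCH(p,q) process, then there exist
`0 < δ < 1` and a positive integer `n₀` such that `E‖A_{n₀S} ⋯ A_1‖^δ < 1`. -/
theorem pgarch_contracting_moment_of_lyap_neg
    {Ω : Type} [MeasurableSpace Ω] {P : Measure Ω} [IsProbabilityMeasure P]
    {p q S : ℕ} {w : ℤ → ℝ} {a b : ℤ → ℕ → ℝ} {η : ℤ → Ω → ℝ}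
    (hinnov : InnovSpec η P) (hcoef : CoefSpec p q S w a b)
    (hlyap : lyap S (Amat p q a b η) P < 0) :
    ∃ δ : ℝ, 0 < δ ∧ δ < 1 ∧ ∃ n₀ : ℕ, 1 ≤ n₀ ∧
      Integrable
        (fun ω => (matNorm (matProd (Amat p q a b η) ((n₀ * S : ℕ) : ℤ) (n₀ * S) ω)) ^ δ) P ∧
      ∫ ω, (matNorm (matProd (Amat p q a b η) ((n₀ * S : ℕ) : ℤ) (n₀ * S) ω)) ^ δ ∂P < 1 := by
  classical
  have measA : ∀ t, Measurable (Amat p q a b η t) := measurable_Amat hinnov.measη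
  unfold lyap at hlyap
  obtain ⟨n, hn⟩ := exists_lt_of_ciInf_lt hlyap
  set k : ℕ := (n : ℕ) * S with hk
  have hk1 : 0 < k := Nat.mul_pos n.pos hcoef.posS
  set X : Ω → ℝ := fun ω => matNorm (matProd (Amat p q a b η) ((k : ℕ) : ℤ) k ω) with hXdef
  have hIneg : ∫ ω, Real.log (X ω) ∂P < 0 := by
    have h1 : (0 : ℝ) < ((n : ℕ) : ℝ) := by exact_mod_cast n.pos
    by_contra hcon
    push_neg at hcon
    nlinarith [mul_nonneg (inv_nonneg.mpr h1.le) hcon]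
  have measX : Measurable X := measurable_matNorm (measurable_matProd measA _ _)
  have hXnonneg : ∀ ω, 0 ≤ X ω := fun ω => matNorm_nonneg _
  -- integrability of X via product bound and independence
  set D : ℤ → ℝ := fun s => ∑ i : Fin (q + p), ∑ j : Fin (q + p),
    (|coefRow q a b s (j : ℕ)| + 1) with hD
  set φ : ℤ → Ω → ℝ := fun s ω => D s * (1 + (η s ω) ^ 2) with hφ
  have hDnonneg : ∀ s, 0 ≤ D s := fun s => by
    simp only [hD]
    exact Finset.sum_nonneg fun i _ => Finset.sum_nonneg fun j _ => by positivity
  have hφmeas : ∀ s, Measurable (φ s) := fun s => by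
    simp only [hφ]
    exact measurable_const.mul (measurable_const.add ((hinnov.measη s).pow_const 2))
  have hφint : ∀ s, Integrable (φ s) P := fun s => by
    simp only [hφ]
    exact ((integrable_const (1 : ℝ)).add (hinnov.int2 s)).const_mul (D s)
  have hφindep : iIndepFun φ P := by
    have h := hinnov.indep.comp (fun s (x : ℝ) => D s * (1 + x ^ 2))
      (fun s => measurable_const.mul (measurable_const.add (measurable_id.pow_const 2)))
    exact h
  have hφintprod : ∀ s : Finset ℤ, Integrable (fun ω => ∏ i ∈ s, φ i ω) P := by
    intro s
    induction s using Finset.induction_on with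
    | empty => simpa using integrable_const (1 : ℝ)
    | @insert c s' hcs ih =>
      have hind : IndepFun (∏ j ∈ s', φ j) (φ c) P :=
        hφindep.indepFun_finsetProd_of_notMem hφmeas hcs
      have heq : (∏ j ∈ s', φ j) = fun ω => ∏ j ∈ s', φ j ω :=
        funext fun ω => Finset.prod_apply ω s' φ
      have hmul : Integrable ((∏ j ∈ s', φ j) * φ c) P :=
        hind.integrable_mul (heq ▸ ih) (hφint c)
      have heq2 : (fun ω => ∏ i ∈ insert c s', φ i ω) = (∏ j ∈ s', φ j) * φ c := by
        funext ω
        simp only [Finset.prod_insert hcs, Pi.mul_apply, Finset.prod_apply]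
        ring
      rw [heq2]
      exact hmul
  obtain ⟨k', hk'⟩ : ∃ k', k = k' + 1 := ⟨k - 1, (Nat.succ_pred_eq_of_pos hk1).symm⟩
  have hXle : ∀ ω, X ω ≤ ∏ i ∈ Finset.range k, φ ((k : ℤ) - i) ω := by
    intro ω
    simp only [hXdef]
    rw [hk']
    refine (matNorm_matProd_le _ _ _ ω).trans ?_
    refine Finset.prod_le_prod (fun i _ => matNorm_nonneg _) (fun i _ => ?_)
    simp only [hφ, hD]
    exact Amat_norm_le a b η _ ω
  have hPint : Integrable (fun ω => ∏ i ∈ Finset.range k, φ ((k : ℤ) - i) ω) P := by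
    have h := hφintprod ((Finset.range k).image (fun i : ℕ => (k : ℤ) - i))
    have heqf : (fun ω => ∏ i ∈ (Finset.range k).image (fun i : ℕ => (k : ℤ) - i), φ i ω)
        = fun ω => ∏ i ∈ Finset.range k, φ ((k : ℤ) - i) ω := by
      funext ω
      exact Finset.prod_image fun x _ y _ hxy => by omega
    rwa [heqf] at h
  have hXint : Integrable X P := by
    refine hPint.mono' measX.aestronglyMeasurable (Filter.Eventually.of_forall fun ω => ?_)
    rw [Real.norm_eq_abs, abs_of_nonneg (hXnonneg ω)]
    exact hXle ω
  have hlogint : Integrable (fun ω => Real.log (X ω)) P := by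
    by_contra hcon
    rw [integral_undef hcon] at hIneg
    exact lt_irrefl 0 hIneg
  -- replace X by its positive modification Z
  set Z : Ω → ℝ := fun ω => if X ω = 0 then 1 else X ω with hZdef
  have hZpos : ∀ ω, 0 < Z ω := fun ω => by
    by_cases h : X ω = 0
    · simp [hZdef, h]
    · simp only [hZdef, if_neg h]
      exact lt_of_le_of_ne (hXnonneg ω) (Ne.symm h)
  have hZmeas : Measurable Z := by
    simp only [hZdef]
    exact Measurable.ite (measX (measurableSet_singleton 0)) measurable_const measX
  have hlogZX : (fun ω => Real.log (Z ω)) = fun ω => Real.log (X ω) := by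
    funext ω
    by_cases h : X ω = 0 <;> simp [hZdef, h]
  have hlogZint : Integrable (fun ω => Real.log (Z ω)) P := by rw [hlogZX]; exact hlogint
  have hIZneg : ∫ ω, Real.log (Z ω) ∂P < 0 := by rw [hlogZX]; exact hIneg
  have hZint : Integrable Z P := by
    refine (hXint.add (integrable_const 1)).mono' hZmeas.aestronglyMeasurable
      (Filter.Eventually.of_forall fun ω => ?_)
    rw [Real.norm_eq_abs, abs_of_nonneg (hZpos ω).le]
    by_cases h : X ω = 0
    · simp [hZdef, h, hXnonneg ω]
    · simp only [hZdef, if_neg h, Pi.add_apply]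
      norm_num
  -- elementary rpow inequalities
  have key_upper : ∀ (z δ' : ℝ), 0 < z → 0 ≤ δ' → δ' ≤ 1 → z ^ δ' ≤ δ' * z + (1 - δ') := by
    intro z δ' hz hδ' hδ'1
    have h := convexOn_exp.2 (Set.mem_univ (Real.log z)) (Set.mem_univ (0 : ℝ)) hδ'
      (show (0 : ℝ) ≤ 1 - δ' by linarith) (by ring)
    rw [smul_eq_mul, smul_eq_mul, smul_eq_mul, smul_eq_mul, mul_zero, add_zero,
      Real.exp_log hz, Real.exp_zero, mul_one] at h
    calc z ^ δ' = Real.exp (Real.log z * δ') := Real.rpow_def_of_pos hz δ'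
      _ = Real.exp (δ' * Real.log z) := by rw [mul_comm]
      _ ≤ δ' * z + (1 - δ') := h
  have key_lower : ∀ (z δ' : ℝ), 0 < z → δ' * Real.log z ≤ z ^ δ' - 1 := by
    intro z δ' hz
    have h := Real.log_le_sub_one_of_pos (Real.rpow_pos_of_pos hz δ')
    rwa [Real.log_rpow hz] at h
  -- dominated convergence as δ ↓ 0
  set δseq : ℕ → ℝ := fun m => ((m : ℝ) + 2)⁻¹ with hδseq
  have hδpos : ∀ m, 0 < δseq m := fun m => by simp only [hδseq]; positivity
  have hδlt1 : ∀ m, δseq m < 1 := fun m => by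
    simp only [hδseq]
    have h2 : (1 : ℝ) < (m : ℝ) + 2 := by
      have := Nat.cast_nonneg (α := ℝ) m
      linarith
    exact inv_lt_one_of_one_lt₀ h2
  set F : ℕ → Ω → ℝ := fun m ω => (Z ω ^ (δseq m) - 1) / (δseq m) with hF
  have hFmeas : ∀ m, AEStronglyMeasurable (F m) P := fun m => by
    simp only [hF]
    have hc : Continuous fun z : ℝ => z ^ (δseq m) :=
      continuous_id.rpow_const fun z => Or.inr (hδpos m).le
    exact (((hc.measurable.comp hZmeas).sub measurable_const).div_const _).aestronglyMeasurable
  have hbound_int : Integrable (fun ω => |Real.log (Z ω)| + (Z ω + 1)) P :=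
    hlogZint.abs.add (hZint.add (integrable_const 1))
  have hFbound : ∀ m, ∀ᵐ ω ∂P, ‖F m ω‖ ≤ |Real.log (Z ω)| + (Z ω + 1) := fun m =>
    Filter.Eventually.of_forall fun ω => by
      have hz := hZpos ω
      have hδ := hδpos m
      have h1 : Real.log (Z ω) ≤ F m ω := by
        simp only [hF]
        rw [le_div_iff₀ hδ, mul_comm]
        exact key_lower (Z ω) (δseq m) hz
      have h2 : F m ω ≤ Z ω - 1 := by
        simp only [hF]
        rw [div_le_iff₀ hδ]
        have h3 := key_upper (Z ω) (δseq m) hz hδ.le (hδlt1 m).le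
        nlinarith
      rw [Real.norm_eq_abs, abs_le]
      constructor
      · have h4 := neg_abs_le (Real.log (Z ω))
        linarith
      · have h5 := abs_nonneg (Real.log (Z ω))
        linarith
  have hlimF : ∀ᵐ ω ∂P, Filter.Tendsto (fun m => F m ω) Filter.atTop
      (nhds (Real.log (Z ω))) :=
    Filter.Eventually.of_forall fun ω => by
      have hderiv : HasDerivAt (fun d : ℝ => Real.exp (Real.log (Z ω) * d))
          (Real.log (Z ω)) 0 := by
        have h1 : HasDerivAt (fun d : ℝ => Real.log (Z ω) * d) (Real.log (Z ω)) 0 := by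
          simpa using (hasDerivAt_id (0 : ℝ)).const_mul (Real.log (Z ω))
        simpa using h1.exp
      have hslope := hasDerivAt_iff_tendsto_slope.mp hderiv
      have hδ0 : Filter.Tendsto δseq Filter.atTop (nhdsWithin (0 : ℝ) {(0 : ℝ)}ᶜ) := by
        apply tendsto_nhdsWithin_of_tendsto_nhds_of_eventually_within
        · have h1 : Filter.Tendsto (fun m : ℕ => (m : ℝ) + 2) Filter.atTop Filter.atTop :=
            Filter.tendsto_atTop_add_const_right _ 2 tendsto_natCast_atTop_atTop
          have h2 := h1.inv_tendsto_atTop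
          simpa [hδseq, Pi.inv_def] using h2
        · exact Filter.Eventually.of_forall fun m => (hδpos m).ne'
      have hcomp := hslope.comp hδ0
      refine hcomp.congr fun m => ?_
      show slope (fun d : ℝ => Real.exp (Real.log (Z ω) * d)) 0 (δseq m) = F m ω
      rw [slope_def_field]
      simp only [hF, mul_zero, Real.exp_zero, sub_zero]
      rw [Real.rpow_def_of_pos (hZpos ω)]
  have htend : Filter.Tendsto (fun m => ∫ ω, F m ω ∂P) Filter.atTop
      (nhds (∫ ω, Real.log (Z ω) ∂P)) :=
    MeasureTheory.tendsto_integral_of_dominated_convergence _ hFmeas hbound_int hFbound hlimF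
  obtain ⟨m, hm⟩ := (htend.eventually_lt_const hIZneg).exists
  set δ : ℝ := δseq m with hδdef
  have hδp : 0 < δ := hδpos m
  have hδ1 : δ < 1 := hδlt1 m
  have hrpow_meas : Measurable fun z : ℝ => z ^ δ :=
    (continuous_id.rpow_const fun z => Or.inr hδp.le).measurable
  have hZδmeas : Measurable fun ω => Z ω ^ δ := hrpow_meas.comp hZmeas
  have hZδnonneg : ∀ ω, 0 ≤ Z ω ^ δ := fun ω => Real.rpow_nonneg (hZpos ω).le δ
  have hZδle : ∀ ω, Z ω ^ δ ≤ Z ω + 1 := fun ω => by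
    have h := key_upper (Z ω) δ (hZpos ω) hδp.le hδ1.le
    nlinarith [hZpos ω]
  have hZδint : Integrable (fun ω => Z ω ^ δ) P := by
    refine (hZint.add (integrable_const 1)).mono' hZδmeas.aestronglyMeasurable
      (Filter.Eventually.of_forall fun ω => ?_)
    rw [Real.norm_eq_abs, abs_of_nonneg (hZδnonneg ω)]
    exact hZδle ω
  have hFval : ∫ ω, F m ω ∂P = δ⁻¹ * ((∫ ω, Z ω ^ δ ∂P) - 1) := by
    have h1 : F m = fun ω => δ⁻¹ * (Z ω ^ δ - 1) := by
      funext ω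
      simp only [hF, hδdef]
      rw [div_eq_inv_mul]
    rw [h1, integral_const_mul]
    rw [integral_sub hZδint (integrable_const 1), integral_const]
    simp
  have hZδlt1 : (∫ ω, Z ω ^ δ ∂P) < 1 := by
    rw [hFval] at hm
    have hδinv : 0 < δ⁻¹ := by positivity
    nlinarith
  have hXδleZδ : ∀ ω, X ω ^ δ ≤ Z ω ^ δ := fun ω => by
    by_cases h : X ω = 0
    · rw [h, Real.zero_rpow hδp.ne']
      exact hZδnonneg ω
    · have hzx : Z ω = X ω := by simp [hZdef, h]
      rw [hzx]
  have hXδnonneg : ∀ ω, 0 ≤ X ω ^ δ := fun ω => Real.rpow_nonneg (hXnonneg ω) δ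
  have hXδmeas : Measurable fun ω => X ω ^ δ := hrpow_meas.comp measX
  have hXδint : Integrable (fun ω => X ω ^ δ) P := by
    refine hZδint.mono' hXδmeas.aestronglyMeasurable
      (Filter.Eventually.of_forall fun ω => ?_)
    rw [Real.norm_eq_abs, abs_of_nonneg (hXδnonneg ω)]
    exact hXδleZδ ω
  have hXδlt1 : (∫ ω, X ω ^ δ ∂P) < 1 :=
    lt_of_le_of_lt (integral_mono hXδint hZδint fun ω => hXδleZδ ω) hZδlt1
  have hgoal : (fun ω => (matNorm (matProd (Amat p q a b η)
      ((((n : ℕ) * S : ℕ)) : ℤ) ((n : ℕ) * S) ω)) ^ δ) = fun ω => X ω ^ δ := by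
    funext ω
    simp only [hXdef, hk]
  refine ⟨δ, hδp, hδ1, (n : ℕ), n.pos, ?_, ?_⟩
  · rw [hgoal]
    exact hXδint
  · rw [show (∫ ω, (matNorm (matProd (Amat p q a b η)
        ((((n : ℕ) * S : ℕ)) : ℤ) ((n : ℕ) * S) ω)) ^ δ ∂P) = ∫ ω, X ω ^ δ ∂P from by
      rw [hgoal]]
    exact hXδlt1
end
end

section
/- Let (A_t) and (B_t) be the random matrices and vectors of the random-coefficient representation of a P-GARCH(p,q) process (with all entries nonnegative, ω_t > 0, and B_{v−j} = ω_{v−j} η_{v−j}² e_1 + ω_{v−j} e_{q+1}). If for some v the products satisfy ∏_{i=0}^{j−1} A_{v−i} B_{v−j} → 0 almost surely as j → ∞, then ∏_{i=0}^{j−1} A_{v−i} → 0 almost surely as j → ∞, i.e. ∏_{i=0}^{j−1} A_{v−i} e_k → 0 a.s. for every canonical basis vector e_k, k = 1, …, p+q. (Implication (A.1) ⇒ (A.2) in the proof of Theorem 2.1.) -/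
open MeasureTheory ProbabilityTheory Filter
open scoped ENNReal NNReal

noncomputable section

open PGARCH Matrix


private lemma periodic_int {α : Type*} (f : ℤ → α) (S : ℕ) (hf : ∀ t, f (t + S) = f t) :
    ∀ (m : ℤ) (t : ℤ), f (t + m * S) = f t := by
  intro m
  induction m using Int.induction_on with
  | zero => simp
  | succ n ih =>
    intro t
    have h1 : t + ((n : ℤ) + 1) * S = (t + n * S) + S := by ring
    rw [h1, hf, ih]
  | pred n ih =>
    intro t
    have h1 : (t + (-(n : ℤ) - 1) * S) + S = t + (-(n : ℤ)) * S := by ring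
    have h2 := hf (t + (-(n : ℤ) - 1) * S)
    rw [h1] at h2
    rw [← h2, ih]

private lemma periodic_mod {α : Type*} (f : ℤ → α) (S : ℕ) (hS : 0 < S)
    (hf : ∀ t, f (t + S) = f t) : ∀ t : ℤ, ∃ n ∈ Finset.range S, f t = f n := by
  intro t
  have hS' : (0 : ℤ) < (S : ℤ) := by exact_mod_cast hS
  refine ⟨(t % S).toNat, ?_, ?_⟩
  · rw [Finset.mem_range]
    have := Int.emod_lt_of_pos t hS'
    omega
  · have hnn : (0 : ℤ) ≤ t % S := Int.emod_nonneg t (by omega)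
    have hcast : ((t % S).toNat : ℤ) = t % S := Int.toNat_of_nonneg hnn
    rw [hcast]
    have key : t = t % S + (t / S) * S := by
      have := Int.emod_add_mul_ediv t S; linarith
    calc f t = f (t % S + (t / S) * S) := by rw [← key]
    _ = f (t % S) := periodic_int f S hf _ _

/-- Main deterministic induction. -/
private lemma aux_main {r q : ℕ} (hqr : q < r)
    (Pm : ℕ → Matrix (Fin r) (Fin r) ℝ)
    (cvec : ℕ → Fin r → ℝ)
    (e2 : ℕ → ℝ)
    (hPnn : ∀ j i k, 0 ≤ Pm j i k)
    (hcnn : ∀ j k, 0 ≤ cvec j k)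
    (hcbd : ∀ k : Fin r, ∃ C, ∀ j, cvec j k ≤ C)
    (he2nn : ∀ j, 0 ≤ e2 j)
    (hrec : ∀ j i (k : Fin r), Pm (j+1) i k =
        cvec j k * (∑ l, Pm j i l * (if (l:ℕ) = 0 then e2 j else if (l:ℕ) = q then 1 else 0)) +
        (if h : (k:ℕ)+1 < r ∧ (k:ℕ)+1 ≠ q then Pm j i ⟨(k:ℕ)+1, h.1⟩ else 0))
    (hU : ∀ i, Tendsto (fun j => ∑ l, Pm j i l *
        (if (l:ℕ) = 0 then e2 j else if (l:ℕ) = q then 1 else 0)) atTop (nhds 0)) :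
    ∀ (k i : Fin r), Tendsto (fun j => Pm j i k) atTop (nhds 0) := by
  set U : ℕ → Fin r → ℝ := fun j i => ∑ l, Pm j i l *
      (if (l:ℕ) = 0 then e2 j else if (l:ℕ) = q then 1 else 0) with hUdef
  have hUnn : ∀ j i, 0 ≤ U j i := by
    intro j i
    refine Finset.sum_nonneg fun l _ => mul_nonneg (hPnn j i l) ?_
    split_ifs with h1 h2
    · exact he2nn j
    · exact zero_le_one
    · exact le_refl 0
  have key : ∀ (n : ℕ) (k : Fin r), r ≤ (k:ℕ) + n →
      ∀ i, Tendsto (fun j => Pm j i k) atTop (nhds 0) := by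
    intro n
    induction n with
    | zero =>
      intro k hk i
      exact absurd hk (by have := k.isLt; omega)
    | succ n ih =>
      intro k hk i
      obtain ⟨C, hC⟩ := hcbd k
      have hterm : Tendsto (fun j => cvec j k * U j i) atTop (nhds 0) := by
        refine squeeze_zero (fun j => mul_nonneg (hcnn j k) (hUnn j i))
          (fun j => mul_le_mul_of_nonneg_right (hC j) (hUnn j i)) ?_
        simpa only [mul_zero] using (hU i).const_mul C
      have hshift : Tendsto (fun j => Pm (j+1) i k) atTop (nhds 0) := by
        by_cases hsucc : (k:ℕ)+1 < r ∧ (k:ℕ)+1 ≠ q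
        · have ihk := ih ⟨(k:ℕ)+1, hsucc.1⟩ (by simp; omega) i
          have heq : ∀ j, Pm (j+1) i k = cvec j k * U j i + Pm j i ⟨(k:ℕ)+1, hsucc.1⟩ := by
            intro j; rw [hrec j i k, dif_pos hsucc]
          simp only [heq]
          simpa using hterm.add ihk
        · have heq : ∀ j, Pm (j+1) i k = cvec j k * U j i := by
            intro j; rw [hrec j i k, dif_neg hsucc, add_zero]
          simp only [heq]
          exact hterm
      exact (tendsto_add_atTop_iff_nat 1).mp hshift
  intro k i
  exact key r k (by omega) i

/-- **Implication (A.1) ⇒ (A.2) in the proof of Theorem 2.1.** For the random matrices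
`(A_t)` and vectors `(B_t)` of the random-coefficient representation of a P-GARCH(p,q)
process, if for some `v` the products satisfy `∏_{i=0}^{j-1} A_{v-i} B_{v-j} → 0` a.s.
as `j → ∞`, then `∏_{i=0}^{j-1} A_{v-i} → 0` a.s., i.e. `∏_{i=0}^{j-1} A_{v-i} e_k → 0`
a.s. for every canonical basis vector `e_k`. -/


theorem pgarch_prod_tendsto_zero_of_prod_B_tendsto_zero
    {Ω : Type} [MeasurableSpace Ω] {P : Measure Ω} [IsProbabilityMeasure P]
    {p q S : ℕ} {w : ℤ → ℝ} {a b : ℤ → ℕ → ℝ} {η : ℤ → Ω → ℝ}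
    (hinnov : InnovSpec η P) (hcoef : CoefSpec p q S w a b)
    (v : ℤ)
    (hAB : ∀ᵐ ω ∂P, Tendsto
      (fun j : ℕ => (matProd (Amat p q a b η) v j ω) *ᵥ Bvec p q w η (v - j) ω)
      atTop (nhds 0)) :
    ∀ᵐ ω ∂P,
      Tendsto (fun j : ℕ => matProd (Amat p q a b η) v j ω) atTop (nhds 0) ∧
      ∀ k : Fin (q + p),
        Tendsto (fun j : ℕ => (matProd (Amat p q a b η) v j ω) *ᵥ Pi.single k 1)
          atTop (nhds 0) := by
  classical
  filter_upwards [hAB] with ω hω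
  set A := Amat p q a b η with hA
  have hstep : ∀ j : ℕ, matProd A v (j+1) ω = matProd A v j ω * A (v - j) ω := by
    intro j
    simp [matProd, List.range_succ]
  have hcr_nn : ∀ (t : ℤ) (k : ℕ), 0 ≤ coefRow q a b t k := by
    intro t k
    unfold coefRow
    split_ifs
    · exact hcoef.anonneg _ _
    · exact hcoef.bnonneg _ _
  have hAnn : ∀ (t : ℤ) (i k : Fin (q+p)), 0 ≤ A t ω i k := by
    intro t i k
    simp only [hA, Amat]
    split_ifs
    · exact mul_nonneg (hcr_nn _ _) (sq_nonneg _)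
    · exact hcr_nn _ _
    · exact zero_le_one
    · exact le_refl 0
  have hPnn : ∀ (j : ℕ) (i k : Fin (q+p)), 0 ≤ matProd A v j ω i k := by
    intro j
    induction j with
    | zero =>
      intro i k
      have h0 : matProd A v 0 ω = 1 := by simp [matProd]
      rw [h0, Matrix.one_apply]
      split_ifs
      · exact zero_le_one
      · exact le_refl 0
    | succ j ih =>
      intro i k
      rw [hstep j, Matrix.mul_apply]
      exact Finset.sum_nonneg fun l _ => mul_nonneg (ih i l) (hAnn _ l k)
  have hAcol : ∀ (t : ℤ) (l k : Fin (q+p)),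
      A t ω l k = coefRow q a b t (k : ℕ) *
          (if (l:ℕ) = 0 then (η t ω)^2 else if (l:ℕ) = q then 1 else 0)
        + (if (l:ℕ) = (k:ℕ)+1 ∧ (k:ℕ)+1 ≠ q then 1 else 0) := by
    intro t l k
    simp only [hA, Amat]
    split_ifs <;> first | ring1 | (exfalso; omega)
  have hrec : ∀ (j : ℕ) (i k : Fin (q+p)), matProd A v (j+1) ω i k =
      coefRow q a b (v - j) (k : ℕ) * (∑ l, matProd A v j ω i l *
        (if (l:ℕ) = 0 then (η (v - j) ω)^2 else if (l:ℕ) = q then 1 else 0)) +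
      (if h : (k:ℕ)+1 < q+p ∧ (k:ℕ)+1 ≠ q then matProd A v j ω i ⟨(k:ℕ)+1, h.1⟩ else 0) := by
    intro j i k
    rw [hstep j, Matrix.mul_apply]
    have hterm : ∀ l : Fin (q+p), matProd A v j ω i l * A (v - j) ω l k =
        coefRow q a b (v - j) (k : ℕ) * (matProd A v j ω i l *
          (if (l:ℕ) = 0 then (η (v - j) ω)^2 else if (l:ℕ) = q then 1 else 0))
        + matProd A v j ω i l * (if (l:ℕ) = (k:ℕ)+1 ∧ (k:ℕ)+1 ≠ q then 1 else 0) := by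
      intro l
      rw [hAcol (v - j) l k]
      ring
    rw [Finset.sum_congr rfl fun l _ => hterm l, Finset.sum_add_distrib, ← Finset.mul_sum]
    congr 1
    by_cases hsucc : (k:ℕ)+1 < q+p ∧ (k:ℕ)+1 ≠ q
    · rw [dif_pos hsucc]
      rw [Finset.sum_eq_single (⟨(k:ℕ)+1, hsucc.1⟩ : Fin (q+p))]
      · rw [if_pos ⟨rfl, hsucc.2⟩, mul_one]
      · intro l _ hl
        rw [if_neg, mul_zero]
        rintro ⟨h1, -⟩
        exact hl (Fin.ext h1)
      · intro h
        exact absurd (Finset.mem_univ _) h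
    · rw [dif_neg hsucc]
      refine Finset.sum_eq_zero fun l _ => ?_
      rw [if_neg, mul_zero]
      rintro ⟨h1, h2⟩
      have := l.isLt
      omega
  have hSpos := hcoef.posS
  have hne : (Finset.range S).Nonempty := Finset.nonempty_range_iff.mpr hSpos.ne'
  set c : ℝ := (Finset.range S).inf' hne (fun n => w n) with hcdef
  have hc0 : 0 < c := (Finset.lt_inf'_iff hne).mpr fun n _ => hcoef.wpos n
  have hcle : ∀ j : ℕ, c ≤ w (v - j) := by
    intro j
    obtain ⟨n, hn, hfn⟩ := periodic_mod w S hSpos hcoef.wper (v - j)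
    rw [hfn]
    exact Finset.inf'_le _ hn
  have hUnn : ∀ (j : ℕ) (i : Fin (q+p)), 0 ≤ ∑ l, matProd A v j ω i l *
      (if (l:ℕ) = 0 then (η (v - j) ω)^2 else if (l:ℕ) = q then 1 else 0) := by
    intro j i
    refine Finset.sum_nonneg fun l _ => mul_nonneg (hPnn j i l) ?_
    split_ifs
    · exact sq_nonneg _
    · exact zero_le_one
    · exact le_refl 0
  have hBcomp : ∀ (j : ℕ) (i : Fin (q+p)),
      (matProd A v j ω *ᵥ Bvec p q w η (v - j) ω) i
        = w (v - j) * ∑ l, matProd A v j ω i l *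
          (if (l:ℕ) = 0 then (η (v - j) ω)^2 else if (l:ℕ) = q then 1 else 0) := by
    intro j i
    simp only [Matrix.mulVec, dotProduct, Bvec, Finset.mul_sum]
    refine Finset.sum_congr rfl fun l _ => ?_
    split_ifs <;> ring
  have hU : ∀ i : Fin (q+p), Tendsto (fun j : ℕ => ∑ l, matProd A v j ω i l *
      (if (l:ℕ) = 0 then (η (v - j) ω)^2 else if (l:ℕ) = q then 1 else 0))
      atTop (nhds 0) := by
    intro i
    have hcomp := tendsto_pi_nhds.mp hω i
    refine squeeze_zero (fun j => hUnn j i) (fun j => ?_)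
      (by simpa only [Pi.zero_apply, mul_zero] using hcomp.const_mul c⁻¹)
    rw [hBcomp j i, ← mul_assoc]
    have h1 : (1:ℝ) ≤ c⁻¹ * w (v - j) := by
      rw [inv_mul_eq_div, le_div_iff₀ hc0]
      linarith [hcle j]
    exact le_mul_of_one_le_left (hUnn j i) h1
  have hcbd : ∀ k : Fin (q+p), ∃ C : ℝ, ∀ j : ℕ, coefRow q a b (v - j) (k : ℕ) ≤ C := by
    intro k
    have hper : ∀ t : ℤ, coefRow q a b (t + S) (k : ℕ) = coefRow q a b t (k : ℕ) := by
      intro t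
      unfold coefRow
      split_ifs
      · exact hcoef.aper _ _
      · exact hcoef.bper _ _
    refine ⟨(Finset.range S).sup' hne (fun n => coefRow q a b n (k : ℕ)), fun j => ?_⟩
    obtain ⟨n, hn, hfn⟩ := periodic_mod (fun t => coefRow q a b t (k : ℕ)) S hSpos hper (v - j)
    rw [hfn]
    exact Finset.le_sup' (fun n : ℕ => coefRow q a b (n : ℤ) (k : ℕ)) hn
  have hcols := aux_main (show q < q + p by have := hcoef.posp; omega)
      (fun j => matProd A v j ω)
      (fun j k => coefRow q a b (v - j) (k : ℕ)) (fun j => (η (v - j) ω)^2)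
      hPnn (fun j k => hcr_nn _ _) hcbd (fun j => sq_nonneg _) hrec hU
  constructor
  · refine tendsto_pi_nhds.mpr ?_
    intro i
    rw [tendsto_pi_nhds]
    intro k
    simpa using hcols k i
  · intro k
    rw [tendsto_pi_nhds]
    intro i
    have he : ∀ j : ℕ, (matProd A v j ω *ᵥ Pi.single k 1) i = matProd A v j ω i k := by
      intro j
      simp [Matrix.mulVec_single]
    simp only [he, Pi.zero_apply]
    exact hcols k i
end
end
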